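/- The trigonometric spline St(f,σ,r,Δ_N,t) = a_0/2 + Σ_{k=1}^{n} H_k(r,N)^{-1}[a_k C_k(σ,r,N,t) + b_k S_k(σ,r,N,t)] interpolates the trigonometric polynomial T_n*(t) at all grid nodes: St(f,σ,r,Δ_N,t_i) = T_n*(t_i) for i = 1,…,N. -/

import Mathlib

theorem stmt_9 (n N r : ℕ) (hn : 1 ≤ n) (hN : N = 2 * n + 1) (hr : 1 ≤ r)
    (a b : ℕ → ℝ) :
    let σ : ℕ → ℝ → ℝ := fun k j =>
      (Real.sin (k * Real.pi / N)) ^ (1 + r) / j ^ (1 + r)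
    let H : ℕ → ℝ := fun k =>
      σ k k + ∑' m : ℕ, (σ k ((m + 1 : ℝ) * N - k) + σ k ((m + 1 : ℝ) * N + k))
    let C : ℕ → ℝ → ℝ := fun k t =>
      σ k k * Real.cos (k * t) +
        ∑' m : ℕ,
          (σ k ((m + 1 : ℝ) * N - k) * Real.cos (((m + 1 : ℝ) * N - k) * t) +
           σ k ((m + 1 : ℝ) * N + k) * Real.cos (((m + 1 : ℝ) * N + k) * t))
    let S : ℕ → ℝ → ℝ := fun k t =>
      σ k k * Real.sin (k * t) +
        ∑' m : ℕ,
          (-(σ k ((m + 1 : ℝ) * N - k) * Real.sin (((m + 1 : ℝ) * N - k) * t)) +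
           σ k ((m + 1 : ℝ) * N + k) * Real.sin (((m + 1 : ℝ) * N + k) * t))
    let St : ℝ → ℝ := fun t =>
      a 0 / 2 + ∑ k ∈ Finset.Icc 1 n, (H k)⁻¹ * (a k * C k t + b k * S k t)
    let T : ℝ → ℝ := fun t =>
      a 0 / 2 + ∑ k ∈ Finset.Icc 1 n, (a k * Real.cos (k * t) + b k * Real.sin (k * t))
    (∀ k ∈ Finset.Icc 1 n, H k ≠ 0) →
    ∀ i : ℕ, 1 ≤ i → i ≤ N →
      St (2 * Real.pi * ((i : ℝ) - 1) / N) = T (2 * Real.pi * ((i : ℝ) - 1) / N) := by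

  intro σ H C S St T hH i hi hiN
  have hNne : (N:ℝ) ≠ 0 := by rw [hN]; positivity
  set t : ℝ := 2 * Real.pi * ((i : ℝ) - 1) / N with ht
  have hNt : (N:ℝ) * t = ((i:ℝ) - 1) * (2 * Real.pi) := by
    rw [ht]; field_simp
  simp only [St, T]
  congr 1
  apply Finset.sum_congr rfl
  intro k hk
  have hC : C k t = H k * Real.cos (k * t) := by
    simp only [C, H]
    rw [add_mul, ← tsum_mul_right]
    congr 1
    apply tsum_congr
    intro m
    have h1 : ((m+1:ℝ)*N - k)*t = -(k*t) + ((((m:ℤ)+1)*((i:ℤ)-1)) : ℤ) * (2*Real.pi) := by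
      push_cast
      linear_combination ((m:ℝ)+1) * hNt
    have h2 : ((m+1:ℝ)*N + k)*t = (k*t) + ((((m:ℤ)+1)*((i:ℤ)-1)) : ℤ) * (2*Real.pi) := by
      push_cast
      linear_combination ((m:ℝ)+1) * hNt
    rw [h1, h2, Real.cos_add_int_mul_two_pi, Real.cos_add_int_mul_two_pi, Real.cos_neg]
    ring
  have hS : S k t = H k * Real.sin (k * t) := by
    simp only [S, H]
    rw [add_mul, ← tsum_mul_right]
    congr 1
    apply tsum_congr
    intro m
    have h1 : ((m+1:ℝ)*N - k)*t = -(k*t) + ((((m:ℤ)+1)*((i:ℤ)-1)) : ℤ) * (2*Real.pi) := by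
      push_cast
      linear_combination ((m:ℝ)+1) * hNt
    have h2 : ((m+1:ℝ)*N + k)*t = (k*t) + ((((m:ℤ)+1)*((i:ℤ)-1)) : ℤ) * (2*Real.pi) := by
      push_cast
      linear_combination ((m:ℝ)+1) * hNt
    rw [h1, h2, Real.sin_add_int_mul_two_pi, Real.sin_add_int_mul_two_pi, Real.sin_neg]
    ring
  rw [hC, hS]
  have hhk := hH k hk
  field_simp
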